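/- arXiv:2111.10285 — 2 statements merged into one kernel-verified Lean document; each statement's English description precedes it below -/
import Mathlib

section
/- In a finite two-player zero-sum game with payoff matrix C ∈ ℝ^{m×n}, the minimax value equals the maximin value: min over probability vectors x ∈ Δ_n of max_i (Cx)_i equals max over probability vectors y ∈ Δ_m of min_j (yᵀC)_j. -/
open Matrix Set Pointwise

/-- Theorem of the alternative (von Neumann form). -/
lemma vonNeumann_alt {m n : ℕ} (hm : 0 < m) (hn : 0 < n)
    (A : Matrix (Fin m) (Fin n) ℝ)
    (h : ∀ x ∈ stdSimplex ℝ (Fin n), ∃ i, 0 < A.mulVec x i) :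
    ∃ y ∈ stdSimplex ℝ (Fin m), ∀ j, 0 < Matrix.vecMul y A j := by
  classical
  set K : Set (Fin m → ℝ) := A.mulVecLin '' stdSimplex ℝ (Fin n) with hK
  set P : Set (Fin m → ℝ) := univ.pi fun _ : Fin m => Ici (0:ℝ) with hP
  have hKcomp : IsCompact K := (isCompact_stdSimplex ℝ _).image
    A.mulVecLin.continuous_of_finiteDimensional
  have hPclosed : IsClosed P := isClosed_set_pi fun i _ => isClosed_Ici
  have hSclosed : IsClosed (K + P) := hPclosed.add_left_of_isCompact hKcomp
  have hSconv : Convex ℝ (K + P) :=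
    ((convex_stdSimplex ℝ _).linear_image A.mulVecLin).add
      (convex_pi fun i _ => convex_Ici 0)
  have h0 : (0 : Fin m → ℝ) ∉ K + P := by
    rintro ⟨k, ⟨x, hx, rfl⟩, p, hp, hkp⟩
    obtain ⟨i, hi⟩ := h x hx
    have := congrFun hkp i
    have hpi : 0 ≤ p i := hp i (mem_univ i)
    simp only [Pi.add_apply, Pi.zero_apply, Matrix.mulVecLin_apply] at this
    linarith
  obtain ⟨f, u, hfu, hub⟩ := geometric_hahn_banach_point_closed hSconv hSclosed h0
  have hu0 : 0 < u := by simpa using hfu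
  set y : Fin m → ℝ := fun i => f (Pi.single i 1) with hy
  have hf : ∀ z : Fin m → ℝ, f z = ∑ i, z i * y i := by
    intro z
    conv_lhs => rw [pi_eq_sum_univ z]
    rw [map_sum]
    refine Finset.sum_congr rfl fun i _ => ?_
    rw [f.map_smul]
    simp only [hy, smul_eq_mul]
    congr 1
    congr 1
    ext j
    simp [Pi.single_apply, eq_comm]
  -- a base point
  obtain ⟨x₀, hx₀⟩ : (stdSimplex ℝ (Fin n)).Nonempty :=
    ⟨Pi.single ⟨0, hn⟩ 1, single_mem_stdSimplex ℝ _⟩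
  set c : ℝ := f (A.mulVecLin x₀) with hc
  have hbase : ∀ t : ℝ, 0 ≤ t → ∀ i, u < c + t * y i := by
    intro t ht i
    have hmem : A.mulVecLin x₀ + t • (Pi.single i 1 : Fin m → ℝ) ∈ K + P := by
      refine ⟨A.mulVecLin x₀, ⟨x₀, hx₀, rfl⟩, t • (Pi.single i 1 : Fin m → ℝ), ?_, rfl⟩
      intro k _
      simp only [Pi.smul_apply, smul_eq_mul, mem_Ici]
      rcases eq_or_ne k i with rfl | hk
      · simpa using mul_nonneg ht zero_le_one
      · simp [Pi.single_eq_of_ne hk]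
    have := hub _ hmem
    rw [map_add, f.map_smul] at this
    simpa [hc, hy, smul_eq_mul] using this
  have hynn : ∀ i, 0 ≤ y i := by
    intro i
    by_contra hyi
    push_neg at hyi
    have ht0 : 0 ≤ (u - c - 1) / y i := by
      have h1 : u < c := by simpa using hbase 0 le_rfl i
      have : u - c - 1 < 0 := by linarith
      exact le_of_lt (div_pos_of_neg_of_neg this hyi)
    have := hbase _ ht0 i
    rw [div_mul_cancel₀ _ (ne_of_lt hyi)] at this
    linarith
  have hcol : ∀ j, u < Matrix.vecMul y A j := by
    intro j
    have hmem : A.mulVecLin (Pi.single j 1) ∈ K + P := by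
      refine ⟨A.mulVecLin (Pi.single j 1), ⟨_, single_mem_stdSimplex ℝ _, rfl⟩, 0, ?_, by simp⟩
      intro k _; simp
    have := hub _ hmem
    rw [hf] at this
    have heq : ∑ i, (A.mulVecLin (Pi.single j 1)) i * y i = Matrix.vecMul y A j := by
      simp only [Matrix.mulVecLin_apply, Matrix.mulVec_single_one, Matrix.col_apply, Matrix.vecMul, dotProduct]
      exact Finset.sum_congr rfl fun i _ => by ring
    rw [heq] at this
    exact this
  set Y : ℝ := ∑ i, y i with hY
  have hYpos : 0 < Y := by
    rcases (Finset.sum_nonneg fun i _ => hynn i).lt_or_eq with h' | h'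
    · exact h'
    · exfalso
      have hy0 : ∀ i, y i = 0 := by
        intro i
        have := (Finset.sum_eq_zero_iff_of_nonneg (fun i _ => hynn i)).mp h'.symm
        exact this i (Finset.mem_univ i)
      have := hcol ⟨0, hn⟩
      have hz : Matrix.vecMul y A ⟨0, hn⟩ = 0 := by
        simp [Matrix.vecMul, dotProduct, hy0]
      rw [hz] at this; linarith
  refine ⟨Y⁻¹ • y, ⟨fun i => ?_, ?_⟩, fun j => ?_⟩
  · exact mul_nonneg (inv_nonneg.mpr hYpos.le) (hynn i)
  · simp only [Pi.smul_apply, smul_eq_mul, ← Finset.mul_sum]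
    exact inv_mul_cancel₀ hYpos.ne'
  · rw [Matrix.smul_vecMul]
    have := hcol j
    have : 0 < Matrix.vecMul y A j := lt_trans hu0 this
    simpa [smul_eq_mul] using mul_pos (inv_pos.mpr hYpos) this


/-- The minimax theorem for finite zero-sum games with payoff matrix `C`:
the minimax value `min_{x ∈ Δ_n} max_i (Cx)_i` equals the maximin value
`max_{y ∈ Δ_m} min_j (yᵀC)_j`. -/
theorem minimax_eq_maximin (m n : ℕ) (hm : 0 < m) (hn : 0 < n)
    (C : Matrix (Fin m) (Fin n) ℝ) :
    (⨅ x : stdSimplex ℝ (Fin n), ⨆ i : Fin m, C.mulVec (x : Fin n → ℝ) i) =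
      ⨆ y : stdSimplex ℝ (Fin m), ⨅ j : Fin n, Matrix.vecMul (y : Fin m → ℝ) C j := by
  classical
  have hmne : Nonempty (Fin m) := ⟨⟨0, hm⟩⟩
  have hnne : Nonempty (Fin n) := ⟨⟨0, hn⟩⟩
  have hXne : Nonempty (stdSimplex ℝ (Fin n)) :=
    ⟨⟨Pi.single ⟨0, hn⟩ 1, single_mem_stdSimplex ℝ _⟩⟩
  have hYne : Nonempty (stdSimplex ℝ (Fin m)) :=
    ⟨⟨Pi.single ⟨0, hm⟩ 1, single_mem_stdSimplex ℝ _⟩⟩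
  set g : (Fin n → ℝ) → ℝ := fun x => ⨆ i : Fin m, C.mulVec x i with hg
  set h : (Fin m → ℝ) → ℝ := fun y => ⨅ j : Fin n, Matrix.vecMul y C j with hh
  -- entrywise bounds
  set B₁ : ℝ := ⨅ p : Fin m × Fin n, C p.1 p.2 with hB₁
  set B₂ : ℝ := ⨆ p : Fin m × Fin n, C p.1 p.2 with hB₂
  have hCB₁ : ∀ i j, B₁ ≤ C i j := fun i j =>
    ciInf_le (f := fun p : Fin m × Fin n => C p.1 p.2) (Set.finite_range _).bddBelow ⟨i, j⟩
  have hCB₂ : ∀ i j, C i j ≤ B₂ := fun i j =>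
    le_ciSup (f := fun p : Fin m × Fin n => C p.1 p.2) (Set.finite_range _).bddAbove ⟨i, j⟩
  -- convex combination bounds
  have hcomb_le : ∀ (k : ℕ) (x : Fin k → ℝ), x ∈ stdSimplex ℝ (Fin k) →
      ∀ (f : Fin k → ℝ) (c : ℝ), (∀ j, f j ≤ c) → ∑ j, x j * f j ≤ c := by
    intro k x hx f c hf
    calc ∑ j, x j * f j ≤ ∑ j, x j * c :=
          Finset.sum_le_sum fun j _ => mul_le_mul_of_nonneg_left (hf j) (hx.1 j)
    _ = c := by rw [← Finset.sum_mul, hx.2, one_mul]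
  have hcomb_ge : ∀ (k : ℕ) (x : Fin k → ℝ), x ∈ stdSimplex ℝ (Fin k) →
      ∀ (f : Fin k → ℝ) (c : ℝ), (∀ j, c ≤ f j) → c ≤ ∑ j, x j * f j := by
    intro k x hx f c hf
    calc c = ∑ j, x j * c := by rw [← Finset.sum_mul, hx.2, one_mul]
    _ ≤ ∑ j, x j * f j :=
          Finset.sum_le_sum fun j _ => mul_le_mul_of_nonneg_left (hf j) (hx.1 j)
  -- bounds on g and h over the simplex
  have hgB₁ : ∀ x ∈ stdSimplex ℝ (Fin n), B₁ ≤ g x := by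
    intro x hx
    refine le_trans ?_ (le_ciSup (Set.finite_range _).bddAbove (⟨0, hm⟩ : Fin m))
    simp only [Matrix.mulVec, dotProduct]
    exact hcomb_ge n x hx _ B₁ (fun j => hCB₁ _ j) |>.trans_eq
      (Finset.sum_congr rfl fun j _ => mul_comm _ _)
  have hhB₂ : ∀ y ∈ stdSimplex ℝ (Fin m), h y ≤ B₂ := by
    intro y hy
    refine le_trans (ciInf_le (Set.finite_range _).bddBelow (⟨0, hn⟩ : Fin n)) ?_
    simp only [Matrix.vecMul, dotProduct]
    exact hcomb_le m y hy _ B₂ (fun i => hCB₂ i _)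
  have hbddg : BddBelow (Set.range fun x : stdSimplex ℝ (Fin n) => g (x : Fin n → ℝ)) :=
    ⟨B₁, by rintro _ ⟨x, rfl⟩; exact hgB₁ x x.2⟩
  have hbddh : BddAbove (Set.range fun y : stdSimplex ℝ (Fin m) => h (y : Fin m → ℝ)) :=
    ⟨B₂, by rintro _ ⟨y, rfl⟩; exact hhB₂ y y.2⟩
  -- key pairing inequality : h y ≤ g x
  have hpair : ∀ x ∈ stdSimplex ℝ (Fin n), ∀ y ∈ stdSimplex ℝ (Fin m), h y ≤ g x := by
    intro x hx y hy
    have h1 : h y ≤ ∑ j, x j * Matrix.vecMul y C j := by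
      refine hcomb_ge n x hx _ _ fun j => ?_
      exact ciInf_le (Set.finite_range _).bddBelow j
    have h2 : ∑ i, y i * C.mulVec x i ≤ g x := by
      refine hcomb_le m y hy _ _ fun i => ?_
      exact le_ciSup (Set.finite_range _).bddAbove i
    have hmid : ∑ j, x j * Matrix.vecMul y C j = ∑ i, y i * C.mulVec x i := by
      simp only [Matrix.vecMul, Matrix.mulVec, dotProduct, Finset.mul_sum,
        Finset.sum_mul]
      rw [Finset.sum_comm]
      exact Finset.sum_congr rfl fun i _ => Finset.sum_congr rfl fun j _ => by ring
    linarith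
  refine le_antisymm ?_ ?_
  · -- strong duality
    by_contra hlt
    push_neg at hlt
    set V₁ := ⨅ x : stdSimplex ℝ (Fin n), g (x : Fin n → ℝ) with hV₁
    set V₂ := ⨆ y : stdSimplex ℝ (Fin m), h (y : Fin m → ℝ) with hV₂
    change V₂ < V₁ at hlt
    set v : ℝ := (V₁ + V₂) / 2 with hv
    have hv₂ : V₂ < v := by simp only [hv]; linarith
    have hv₁ : v < V₁ := by simp only [hv]; linarith
    set A : Matrix (Fin m) (Fin n) ℝ := Matrix.of fun i j => C i j - v with hA
    have halt : ∀ x ∈ stdSimplex ℝ (Fin n), ∃ i, 0 < A.mulVec x i := by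
      intro x hx
      have hgx : v < g x := lt_of_lt_of_le hv₁ (ciInf_le hbddg ⟨x, hx⟩)
      by_contra hno
      push_neg at hno
      have : g x ≤ v := by
        refine ciSup_le fun i => ?_
        have hAi := hno i
        have : A.mulVec x i = C.mulVec x i - v * ∑ j, x j := by
          simp only [hA, Matrix.mulVec, dotProduct, Matrix.of_apply,
            Finset.mul_sum, ← Finset.sum_sub_distrib]
          exact Finset.sum_congr rfl fun j _ => by ring
        rw [this, hx.2, mul_one] at hAi
        linarith
      linarith
    obtain ⟨y, hy, hypos⟩ := vonNeumann_alt hm hn A halt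
    have hyv : v ≤ h y := by
      refine le_ciInf fun j => ?_
      have := hypos j
      have heq : Matrix.vecMul y A j = Matrix.vecMul y C j - v * ∑ i, y i := by
        simp only [hA, Matrix.vecMul, dotProduct, Matrix.of_apply,
          Finset.mul_sum, ← Finset.sum_sub_distrib]
        exact Finset.sum_congr rfl fun i _ => by ring
      rw [heq, hy.2, mul_one] at this
      linarith
    have : v ≤ V₂ := le_trans hyv (le_ciSup hbddh ⟨y, hy⟩)
    linarith
  · -- weak duality
    refine ciSup_le fun y => le_ciInf fun x => ?_
    exact hpair x x.2 y y.2
end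

section
/- Fix prices p with p_1 ≤ p_2 ≤ ... ≤ p_N (nondecreasing prices), resource number R ≤ N, and finite budget set B. Among all budget sequences from B, a sequence maximizing the gap Benchmark(b) − Alg(b,p) can be found among sequences of the following two forms: (a) every slot i is assigned the largest budget in B strictly less than p_i (or min B if none exists); or (b) there is an index j such that among slots 1..j, the k slots with the smallest prices (k = remaining resource) are assigned the smallest budget in B that is ≥ the slot's price, slots after the last such accepted slot are assigned max B, and the remaining slots before are assigned as in (a). In particular, no gap-maximizing sequence needs to leave resources partially consumed beyond these two patterns, assuming every candidate acceptance budget exists in B. -/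
open scoped Classical



/-- Number of resource units consumed by the online posted-price algorithm
before slot `i` (capacity `R`, prices `p`, budgets `b`). -/
noncomputable def usedRes (R : ℕ) (p b : ℕ → ℝ) : ℕ → ℕ
  | 0 => 0
  | i + 1 => usedRes R p b i + (if p i ≤ b i ∧ usedRes R p b i < R then 1 else 0)

/-- User `i` is accepted iff its budget meets the price and a resource unit remains. -/
def acceptPred (R : ℕ) (p b : ℕ → ℝ) (i : ℕ) : Prop :=
  p i ≤ b i ∧ usedRes R p b i < R

/-- Social welfare obtained by the online algorithm on the first `N` users. -/
noncomputable def algVal (R N : ℕ) (p b : ℕ → ℝ) : ℝ :=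
  ∑ i ∈ Finset.range N, if p i ≤ b i ∧ usedRes R p b i < R then b i else 0

/-- Offline optimum: the sum of the `min R N` largest budgets among the first `N`. -/
noncomputable def benchVal (R N : ℕ) (b : ℕ → ℝ) : ℝ :=
  ((((List.range N).map b).insertionSort (· ≥ ·)).take R).sum

/-- The gap between the offline optimum and the online algorithm. -/
noncomputable def gapVal (R N : ℕ) (p b : ℕ → ℝ) : ℝ :=
  benchVal R N b - algVal R N p b

/-- Form (a): every slot gets the largest budget in `B` strictly below its
price, or `min B` when no budget lies below the price. -/
def FormA (N : ℕ) (p : ℕ → ℝ) (B : Finset ℝ) (b : ℕ → ℝ) : Prop :=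
  ∀ i < N,
    (IsGreatest {β : ℝ | β ∈ B ∧ β < p i} (b i)) ∨
      ((¬ ∃ β ∈ B, β < p i) ∧ IsLeast {β : ℝ | β ∈ B} (b i))

/-- Form (b): for some index `j`, the `R` slots with the smallest prices among
slots `0..j` are assigned the smallest budget in `B` that is at least the
slot's price (these users are accepted using up all resources); slots after the
last such accepted slot get `max B`; all other slots are assigned as in form (a). -/
def FormB (R N : ℕ) (p : ℕ → ℝ) (B : Finset ℝ) (b : ℕ → ℝ) : Prop :=
  ∃ j < N, ∃ S : Finset ℕ, S ⊆ Finset.range (j + 1) ∧ S.card = R ∧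
    (∀ i ∈ S, IsLeast {β : ℝ | β ∈ B ∧ p i ≤ β} (b i)) ∧
    (∀ i ∈ S, ∀ i' ∈ Finset.range (j + 1) \ S, p i ≤ p i') ∧
    ∃ t ∈ S, (∀ i ∈ S, i ≤ t) ∧
      (∀ i', t < i' → i' < N → IsGreatest {β : ℝ | β ∈ B} (b i')) ∧
      (∀ i' < t, i' ∉ S →
        (IsGreatest {β : ℝ | β ∈ B ∧ β < p i'} (b i')) ∨
          ((¬ ∃ β ∈ B, β < p i') ∧ IsLeast {β : ℝ | β ∈ B} (b i')))

private lemma take_succ_sum_le (a : ℝ) (l : List ℝ) (R : ℕ)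
    (hal : ∀ x ∈ l, x ≤ a) (ha0 : (0:ℝ) ≤ a) :
    (l.take (R+1)).sum ≤ a + (l.take R).sum := by
  by_cases h : R < l.length
  · rw [List.sum_take_succ _ _ h]
    have := hal l[R] (List.getElem_mem h)
    linarith
  · push_neg at h
    rw [List.take_of_length_le h, List.take_of_length_le (le_trans h (Nat.le_succ R))]
    linarith

private lemma sum_le_take_of_sorted (R : ℕ) :
    ∀ (l : List ℝ), l.Pairwise (· ≥ ·) → (∀ x ∈ l, (0:ℝ) ≤ x) →
    ∀ s : Multiset ℝ, s ≤ ↑l → Multiset.card s ≤ R → s.sum ≤ (l.take R).sum := by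
  induction R with
  | zero =>
    intro l _ _ s _ hc
    simp only [Nat.le_zero, Multiset.card_eq_zero] at hc
    simp [hc]
  | succ R ih =>
    intro l hl h0 s hs hc
    induction l generalizing s with
    | nil =>
      have h0' : s ≤ 0 := by simpa using hs
      have : s = 0 := le_antisymm h0' (Multiset.zero_le s)
      simp [this]
    | cons a l ihl =>
      have hal : ∀ x ∈ l, x ≤ a := fun x hx => (List.pairwise_cons.1 hl).1 x hx
      have hl' : l.Pairwise (· ≥ ·) := (List.pairwise_cons.1 hl).2
      have h0' : ∀ x ∈ l, (0:ℝ) ≤ x := fun x hx => h0 x (List.mem_cons_of_mem _ hx)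
      have ha0 : (0:ℝ) ≤ a := h0 a List.mem_cons_self
      by_cases hmem : a ∈ s
      · have hse : s = a ::ₘ s.erase a := (Multiset.cons_erase hmem).symm
        have h1 : s.erase a ≤ ↑l := by
          have := Multiset.erase_le_erase (a := a) hs
          simpa using this
        have h2 : Multiset.card (s.erase a) ≤ R := by
          have h3 := Multiset.card_erase_of_mem hmem
          have h4 : 1 ≤ Multiset.card s := by
            rw [hse]; simp
          rw [h3, Nat.pred_eq_sub_one]; omega
        have := ih l hl' h0' (s.erase a) h1 h2
        rw [hse]
        simp only [Multiset.sum_cons, List.take_succ_cons, List.sum_cons]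
        linarith
      · have h1 : s ≤ ↑l := by
          have : s.erase a = s := Multiset.erase_of_notMem hmem
          calc s = s.erase a := this.symm
            _ ≤ (↑(a :: l) : Multiset ℝ).erase a := Multiset.erase_le_erase _ hs
            _ = ↑l := by rw [← Multiset.cons_coe, Multiset.erase_cons_head]
        have := ihl hl' h0' s h1 hc
        calc s.sum ≤ (l.take (R+1)).sum := this
          _ ≤ a + (l.take R).sum := take_succ_sum_le a l R hal ha0
          _ = ((a :: l).take (R+1)).sum := by simp [List.take_succ_cons]

private lemma bench_ge (R N : ℕ) (b : ℕ → ℝ) (h0 : ∀ i ∈ Finset.range N, (0:ℝ) ≤ b i)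
    (W : Finset ℕ) (hW : W ⊆ Finset.range N) (hc : W.card ≤ R) :
    ∑ i ∈ W, b i ≤ benchVal R N b := by
  set l : List ℝ := ((List.range N).map b).insertionSort (· ≥ ·) with hldef
  have hperm : l.Perm ((List.range N).map b) := List.perm_insertionSort _ _
  have hsorted : l.Pairwise (· ≥ ·) := List.pairwise_insertionSort _ _
  have h0' : ∀ x ∈ l, (0:ℝ) ≤ x := by
    intro x hx
    have := hperm.mem_iff.1 hx
    obtain ⟨i, hi, rfl⟩ := List.mem_map.1 this
    exact h0 i (by simpa using hi)
  have hsum : ∑ i ∈ W, b i = (W.val.map b).sum := by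
    rfl
  have hle : W.val.map b ≤ ↑l := by
    have h1 : W.val ≤ (Finset.range N).val := Finset.val_le_iff.2 hW
    have h2 : Multiset.map b W.val ≤ Multiset.map b (Finset.range N).val :=
      Multiset.map_le_map h1
    have h3 : Multiset.map b (Finset.range N).val = ↑((List.range N).map b) := by
      simp [Finset.range_val, Multiset.range]
    have h4 : (↑((List.range N).map b) : Multiset ℝ) = ↑l :=
      (Multiset.coe_eq_coe.2 hperm).symm
    rw [hsum] at *
    calc Multiset.map b W.val ≤ Multiset.map b (Finset.range N).val := h2
      _ = ↑l := by rw [h3, h4]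
  have hcard : Multiset.card (W.val.map b) ≤ R := by simpa using hc
  rw [hsum]
  exact sum_le_take_of_sorted R l hsorted h0' _ hle hcard

private lemma bench_exists (R N : ℕ) (b : ℕ → ℝ) (hRN : R ≤ N) :
    ∃ T : Finset ℕ, T ⊆ Finset.range N ∧ T.card = R ∧ benchVal R N b = ∑ i ∈ T, b i := by
  set l : List ℝ := ((List.range N).map b).insertionSort (· ≥ ·) with hldef
  have hperm : l.Perm ((List.range N).map b) := List.perm_insertionSort _ _
  have hlen : l.length = N := by
    rw [hperm.length_eq]; simp
  have hsub : (l.take R).Subperm ((List.range N).map b) :=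
    (List.take_sublist R l).subperm.trans hperm.subperm
  obtain ⟨l₂, hl₂p, hl₂s⟩ := hsub
  obtain ⟨L, hL, hLeq⟩ := List.sublist_map_iff.1 hl₂s
  have hnodup : L.Nodup := hL.nodup (List.nodup_range (n := N))
  have hmemL : ∀ i ∈ L, i ∈ Finset.range N := by
    intro i hi
    simpa using hL.subset hi
  refine ⟨L.toFinset, ?_, ?_, ?_⟩
  · intro i hi
    exact hmemL i (List.mem_toFinset.1 hi)
  · rw [List.toFinset_card_of_nodup hnodup]
    have h1 : l₂.length = (l.take R).length := hl₂p.length_eq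
    have h2 : (l.take R).length = R := by
      rw [List.length_take, hlen]; omega
    have h3 : l₂.length = L.length := by rw [hLeq]; simp
    omega
  · have h1 : (l.take R).sum = l₂.sum := (hl₂p.sum_eq).symm
    have h2 : l₂.sum = (L.map b).sum := by rw [hLeq]
    have h3 : (L.map b).sum = ∑ i ∈ L.toFinset, b i := by
      rw [Finset.sum_list_map_count]
      rw [Finset.sum_congr rfl]
      intro i hi
      rw [List.count_eq_one_of_mem hnodup (List.mem_toFinset.1 hi)]
      simp
    calc benchVal R N b = (l.take R).sum := rfl
      _ = l₂.sum := h1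
      _ = (L.map b).sum := h2
      _ = ∑ i ∈ L.toFinset, b i := h3


private lemma usedRes_mono (R : ℕ) (p b : ℕ → ℝ) {i j : ℕ} (h : i ≤ j) :
    usedRes R p b i ≤ usedRes R p b j := by
  induction j with
  | zero =>
    have : i = 0 := by omega
    simp [this]
  | succ j ih =>
    rcases Nat.lt_or_ge i (j+1) with h1 | h1
    · have := ih (by omega)
      conv_rhs => rw [usedRes]
      split <;> omega
    · have : i = j + 1 := by omega
      simp [this]

private lemma usedRes_le_self (R : ℕ) (p b : ℕ → ℝ) (i : ℕ) :
    usedRes R p b i ≤ i := by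
  induction i with
  | zero => rw [usedRes]
  | succ i ih => rw [usedRes]; split <;> omega

private lemma usedRes_le_R (R : ℕ) (p b : ℕ → ℝ) (i : ℕ) :
    usedRes R p b i ≤ R := by
  induction i with
  | zero => rw [usedRes]; omega
  | succ i ih => rw [usedRes]; split <;> omega

private lemma usedRes_eq_card (R : ℕ) (p b : ℕ → ℝ) (n : ℕ) :
    usedRes R p b n =
      ((Finset.range n).filter fun i => p i ≤ b i ∧ usedRes R p b i < R).card := by
  induction n with
  | zero => rw [usedRes]; simp
  | succ n ih =>
    rw [usedRes, Finset.range_add_one, Finset.filter_insert]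
    split
    · rw [Finset.card_insert_of_notMem (by simp)]
      omega
    · simpa using ih

private lemma algVal_eq (R N : ℕ) (p b : ℕ → ℝ) :
    algVal R N p b =
      ∑ i ∈ (Finset.range N).filter (fun i => p i ≤ b i ∧ usedRes R p b i < R), b i := by
  rw [algVal, Finset.sum_filter]

private noncomputable def qB (p : ℕ → ℝ) (B : Finset ℝ) (i : ℕ) : ℝ :=
  if h : (B.filter (fun β => p i ≤ β)).Nonempty then (B.filter (fun β => p i ≤ β)).min' h
  else 0

private noncomputable def cA (p : ℕ → ℝ) (B : Finset ℝ) (i : ℕ) : ℝ :=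
  if h : (B.filter (fun β => β < p i)).Nonempty then (B.filter (fun β => β < p i)).max' h
  else if h2 : B.Nonempty then B.min' h2 else 0

private noncomputable def cB (R : ℕ) (p : ℕ → ℝ) (B : Finset ℝ) (i : ℕ) : ℝ :=
  if i < R then qB p B i else if h : B.Nonempty then B.max' h else 0

private lemma qB_spec (p : ℕ → ℝ) (B : Finset ℝ) (i : ℕ) (h : ∃ β ∈ B, p i ≤ β) :
    qB p B i ∈ B ∧ p i ≤ qB p B i ∧ ∀ β ∈ B, p i ≤ β → qB p B i ≤ β := by
  obtain ⟨β, hβ, hpβ⟩ := h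
  have hne : (B.filter (fun β => p i ≤ β)).Nonempty := ⟨β, Finset.mem_filter.2 ⟨hβ, hpβ⟩⟩
  rw [qB, dif_pos hne]
  have hmem := (B.filter (fun β => p i ≤ β)).min'_mem hne
  rw [Finset.mem_filter] at hmem
  exact ⟨hmem.1, hmem.2, fun γ hγ hpγ =>
    Finset.min'_le _ γ (Finset.mem_filter.2 ⟨hγ, hpγ⟩)⟩

private lemma cA_mem (p : ℕ → ℝ) (B : Finset ℝ) (hB : B.Nonempty) (i : ℕ) :
    cA p B i ∈ B := by
  rw [cA]
  split
  · rename_i h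
    have := (B.filter (fun β => β < p i)).max'_mem h
    exact (Finset.mem_filter.1 this).1
  · exact B.min'_mem hB

/-- when min B ≥ p i, cA i = min B -/
private lemma cA_eq_min (p : ℕ → ℝ) (B : Finset ℝ) (hB : B.Nonempty) (i : ℕ)
    (h : p i ≤ B.min' hB) : cA p B i = B.min' hB := by
  rw [cA]
  have hne : ¬ (B.filter (fun β => β < p i)).Nonempty := by
    rintro ⟨β, hβ⟩
    rw [Finset.mem_filter] at hβ
    have := B.min'_le β hβ.1
    have := hβ.2
    linarith
  rw [dif_neg hne, dif_pos hB]

/-- when min B < p i, cA i is the greatest element of B below p i -/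
private lemma cA_spec_lt (p : ℕ → ℝ) (B : Finset ℝ) (hB : B.Nonempty) (i : ℕ)
    (h : ¬ p i ≤ B.min' hB) :
    cA p B i ∈ B ∧ cA p B i < p i ∧ ∀ β ∈ B, β < p i → β ≤ cA p B i := by
  have hne : (B.filter (fun β => β < p i)).Nonempty :=
    ⟨B.min' hB, Finset.mem_filter.2 ⟨B.min'_mem hB, by linarith [not_le.1 h]⟩⟩
  rw [cA, dif_pos hne]
  have hmem := (B.filter (fun β => β < p i)).max'_mem hne
  rw [Finset.mem_filter] at hmem
  refine ⟨hmem.1, hmem.2, fun γ hγ hpγ => ?_⟩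
  exact Finset.le_max' (B.filter (fun β => β < p i)) γ (Finset.mem_filter.2 ⟨hγ, hpγ⟩)

private lemma gap_le_cA (R N : ℕ) (p : ℕ → ℝ) (B : Finset ℝ) (hB : B.Nonempty)
    (hBpos : ∀ β ∈ B, 0 < β) (hRN : R ≤ N)
    (b : ℕ → ℝ) (hb : ∀ i < N, b i ∈ B) (hk : usedRes R p b N < R) :
    gapVal R N p b ≤ gapVal R N p (cA p B) := by
  set m := B.min' hB with hm
  set A' := (Finset.range N).filter (fun i => p i ≤ b i) with hA'
  have hAeq : (Finset.range N).filter (fun i => p i ≤ b i ∧ usedRes R p b i < R) = A' := by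
    rw [hA']
    apply Finset.filter_congr
    intro i hi
    have h1 : usedRes R p b i ≤ usedRes R p b N :=
      usedRes_mono R p b (Nat.le_of_lt_succ (Nat.lt_succ_of_lt (Finset.mem_range.1 hi)))
    constructor
    · exact fun h => h.1
    · exact fun h => ⟨h, by omega⟩
  have halgb : algVal R N p b = ∑ i ∈ A', b i := by rw [algVal_eq, hAeq]
  have hcardA : A'.card < R := by
    have := usedRes_eq_card R p b N
    rw [hAeq] at this
    omega
  set I0 := (Finset.range N).filter (fun i => p i ≤ m) with hI0
  have hI0A : I0 ⊆ A' := by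
    intro i hi
    rw [hI0, Finset.mem_filter] at hi
    rw [hA', Finset.mem_filter]
    refine ⟨hi.1, le_trans hi.2 (Finset.min'_le B _ (hb i (Finset.mem_range.1 hi.1)))⟩
  have hI0card : I0.card < R := lt_of_le_of_lt (Finset.card_le_card hI0A) hcardA
  -- cA acceptance analysis
  have hcA_lt : ∀ i, ¬ p i ≤ m →
      cA p B i ∈ B ∧ cA p B i < p i ∧ ∀ β ∈ B, β < p i → β ≤ cA p B i :=
    fun i hi => cA_spec_lt p B hB i hi
  have hfilter_sub : ∀ n ≤ N, (Finset.range n).filter (fun i => p i ≤ cA p B i) ⊆ I0 := by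
    intro n hn i hi
    rw [Finset.mem_filter] at hi
    rw [hI0, Finset.mem_filter]
    refine ⟨Finset.mem_range.2 (lt_of_lt_of_le (Finset.mem_range.1 hi.1) hn), ?_⟩
    by_contra hcon
    have := (hcA_lt i hcon).2.1
    linarith [hi.2]
  have husedcA : ∀ n ≤ N, usedRes R p (cA p B) n < R := by
    intro n hn
    rw [usedRes_eq_card]
    calc ((Finset.range n).filter
        (fun i => p i ≤ cA p B i ∧ usedRes R p (cA p B) i < R)).card
        ≤ ((Finset.range n).filter (fun i => p i ≤ cA p B i)).card := by
          apply Finset.card_le_card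
          intro i hi
          rw [Finset.mem_filter] at hi ⊢
          exact ⟨hi.1, hi.2.1⟩
      _ ≤ I0.card := Finset.card_le_card (hfilter_sub n hn)
      _ < R := hI0card
  have hAcccA : (Finset.range N).filter
      (fun i => p i ≤ cA p B i ∧ usedRes R p (cA p B) i < R) = I0 := by
    apply Finset.Subset.antisymm
    · intro i hi
      rw [Finset.mem_filter] at hi
      exact hfilter_sub N le_rfl (Finset.mem_filter.2 ⟨hi.1, hi.2.1⟩)
    · intro i hi
      have hi' := hi
      rw [hI0, Finset.mem_filter] at hi'
      rw [Finset.mem_filter]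
      have hcAi : cA p B i = m := cA_eq_min p B hB i hi'.2
      exact ⟨hi'.1, by rw [hcAi]; exact hi'.2,
        husedcA i (le_of_lt (Finset.mem_range.1 hi'.1))⟩
  have halgcA : algVal R N p (cA p B) = ∑ i ∈ I0, cA p B i := by
    rw [algVal_eq, hAcccA]
  -- benchmark of b
  obtain ⟨T, hTsub, hTcard, hTval⟩ := bench_exists R N b hRN
  have hcApos : ∀ i ∈ Finset.range N, (0:ℝ) ≤ cA p B i :=
    fun i _ => le_of_lt (hBpos _ (cA_mem p B hB i))
  have hbench_cA : ∑ i ∈ T, cA p B i ≤ benchVal R N (cA p B) :=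
    bench_ge R N (cA p B) hcApos T hTsub (le_of_eq hTcard)
  -- sum manipulations
  have key1 : ∑ i ∈ T, (b i - cA p B i) ≤ ∑ i ∈ T ∩ A', (b i - cA p B i) := by
    rw [← Finset.sum_inter_add_sum_sdiff T A' (fun i => b i - cA p B i)]
    have : ∑ i ∈ T \ A', (b i - cA p B i) ≤ 0 := by
      apply Finset.sum_nonpos
      intro i hi
      rw [Finset.mem_sdiff] at hi
      have hiN : i ∈ Finset.range N := hTsub hi.1
      have hnb : ¬ p i ≤ b i := by
        intro hcon
        exact hi.2 (Finset.mem_filter.2 ⟨hiN, hcon⟩)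
      have hnI0 : ¬ p i ≤ m := by
        intro hcon
        exact hi.2 (hI0A (Finset.mem_filter.2 ⟨hiN, hcon⟩))
      have := (hcA_lt i hnI0).2.2 (b i) (hb i (Finset.mem_range.1 hiN)) (not_le.1 hnb)
      linarith
    linarith
  have key2 : ∑ i ∈ T ∩ A', (b i - cA p B i) ≤ ∑ i ∈ A', (b i - cA p B i) := by
    apply Finset.sum_le_sum_of_subset_of_nonneg Finset.inter_subset_right
    intro i hi _
    rw [hA', Finset.mem_filter] at hi
    by_cases hcase : p i ≤ m
    · rw [cA_eq_min p B hB i hcase]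
      have := Finset.min'_le B (b i) (hb i (Finset.mem_range.1 hi.1))
      linarith
    · have := (hcA_lt i hcase).2.1
      linarith [hi.2]
  have key3 : ∑ i ∈ I0, cA p B i ≤ ∑ i ∈ A', cA p B i :=
    Finset.sum_le_sum_of_subset_of_nonneg hI0A
      (fun i hi _ => hcApos i (Finset.filter_subset _ _ hi))
  have hsplit : ∑ i ∈ T, b i = ∑ i ∈ T, cA p B i + ∑ i ∈ T, (b i - cA p B i) := by
    rw [← Finset.sum_add_distrib]
    apply Finset.sum_congr rfl
    intro i _
    ring
  have hsubT : ∑ i ∈ A', (b i - cA p B i) = ∑ i ∈ A', b i - ∑ i ∈ A', cA p B i :=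
    Finset.sum_sub_distrib _ _
  rw [gapVal, gapVal, halgb, halgcA, hTval]
  linarith

private lemma gap_le_cB (R N : ℕ) (p : ℕ → ℝ) (B : Finset ℝ) (hB : B.Nonempty)
    (hBpos : ∀ β ∈ B, 0 < β) (hRN : R ≤ N)
    (hp : ∀ i j, i ≤ j → j < N → p i ≤ p j)
    (hacc : ∀ i < N, ∃ β ∈ B, p i ≤ β)
    (b : ℕ → ℝ) (hb : ∀ i < N, b i ∈ B) (hk : usedRes R p b N = R) :
    gapVal R N p b ≤ gapVal R N p (cB R p B) := by
  set M := B.max' hB with hM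
  set q := qB p B with hq
  have hqspec : ∀ i < N, q i ∈ B ∧ p i ≤ q i ∧ ∀ β ∈ B, p i ≤ β → q i ≤ β :=
    fun i hi => qB_spec p B i (hacc i hi)
  have hcBq : ∀ i < R, cB R p B i = q i := by
    intro i hi
    rw [cB, if_pos hi]
  have hcBM : ∀ i, ¬ i < R → cB R p B i = M := by
    intro i hi
    rw [cB, if_neg hi, dif_pos hB]
  set A := (Finset.range N).filter (fun i => p i ≤ b i ∧ usedRes R p b i < R) with hA
  have hcardA : A.card = R := by
    have := usedRes_eq_card R p b N
    rw [← hA] at this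
    omega
  have halgb : algVal R N p b = ∑ i ∈ A, b i := by rw [algVal_eq, hA]
  -- acceptance pattern of cB
  have husedcB : ∀ n, n ≤ N → usedRes R p (cB R p B) n = min n R := by
    intro n
    induction n with
    | zero => intro _; rw [usedRes]; simp
    | succ n ih =>
      intro hn
      have ihn := ih (by omega)
      rw [usedRes, ihn]
      by_cases hnR : n < R
      · rw [if_pos]
        · omega
        · refine ⟨?_, by omega⟩
          rw [hcBq n hnR]
          exact (hqspec n (by omega)).2.1
      · rw [if_neg]
        · omega
        · rw [not_and_or]
          right
          omega
  have hAcccB : (Finset.range N).filter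
      (fun i => p i ≤ cB R p B i ∧ usedRes R p (cB R p B) i < R) = Finset.range R := by
    ext i
    simp only [Finset.mem_filter, Finset.mem_range]
    constructor
    · rintro ⟨hiN, _, hused⟩
      rw [husedcB i (le_of_lt hiN)] at hused
      omega
    · intro hiR
      have hiN : i < N := lt_of_lt_of_le hiR hRN
      refine ⟨hiN, ?_, ?_⟩
      · rw [hcBq i hiR]
        exact (hqspec i hiN).2.1
      · rw [husedcB i (le_of_lt hiN)]
        omega
  have halgcB : algVal R N p (cB R p B) = ∑ i ∈ Finset.range R, q i := by
    rw [algVal_eq, hAcccB]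
    exact Finset.sum_congr rfl (fun i hi => hcBq i (Finset.mem_range.1 hi))
  -- benchmark of b
  obtain ⟨T, hTsub, hTcard, hTval⟩ := bench_exists R N b hRN
  have hcBpos : ∀ i ∈ Finset.range N, (0:ℝ) ≤ cB R p B i := by
    intro i hi
    by_cases hiR : i < R
    · rw [hcBq i hiR]
      exact le_of_lt (hBpos _ (hqspec i (lt_of_lt_of_le hiR hRN)).1)
    · rw [hcBM i hiR]
      exact le_of_lt (hBpos _ (B.max'_mem hB))
  have hbench_cB : ∑ i ∈ T, cB R p B i ≤ benchVal R N (cB R p B) :=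
    bench_ge R N (cB R p B) hcBpos T hTsub (le_of_eq hTcard)
  set X := A ∩ Finset.range R with hX
  have key1 : ∑ i ∈ T, (b i - cB R p B i) ≤ ∑ i ∈ T ∩ X, (b i - cB R p B i) := by
    rw [← Finset.sum_inter_add_sum_sdiff T X (fun i => b i - cB R p B i)]
    have : ∑ i ∈ T \ X, (b i - cB R p B i) ≤ 0 := by
      apply Finset.sum_nonpos
      intro i hi
      rw [Finset.mem_sdiff] at hi
      have hiN : i < N := Finset.mem_range.1 (hTsub hi.1)
      by_cases hiR : i < R
      · have hiA : i ∉ A := by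
          intro hcon
          exact hi.2 (Finset.mem_inter.2 ⟨hcon, Finset.mem_range.2 hiR⟩)
        have husedi : usedRes R p b i < R :=
          lt_of_le_of_lt (usedRes_le_self R p b i) hiR
        have hnb : ¬ p i ≤ b i := by
          intro hcon
          exact hiA (Finset.mem_filter.2 ⟨Finset.mem_range.2 hiN, hcon, husedi⟩)
        have := (hqspec i hiN).2.1
        rw [hcBq i hiR]
        linarith [not_le.1 hnb]
      · rw [hcBM i hiR]
        have := Finset.le_max' B (b i) (hb i hiN)
        linarith
    linarith
  have key2 : ∑ i ∈ T ∩ X, (b i - cB R p B i) ≤ ∑ i ∈ X, (b i - cB R p B i) := by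
    apply Finset.sum_le_sum_of_subset_of_nonneg Finset.inter_subset_right
    intro i hi _
    rw [hX, Finset.mem_inter] at hi
    have hiR : i < R := Finset.mem_range.1 hi.2
    have hiN : i < N := lt_of_lt_of_le hiR hRN
    have hiA := Finset.mem_filter.1 hi.1
    rw [hcBq i hiR]
    have := (hqspec i hiN).2.2 (b i) (hb i hiN) hiA.2.1
    linarith
  have hXcB : ∑ i ∈ X, (b i - cB R p B i) = ∑ i ∈ X, b i - ∑ i ∈ X, q i := by
    rw [← Finset.sum_sub_distrib]
    apply Finset.sum_congr rfl
    intro i hi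
    rw [hcBq i (Finset.mem_range.1 (Finset.mem_inter.1 hi).2)]
  -- the exchange inequality
  have hcardeq : (Finset.range R \ A).card = (A \ Finset.range R).card := by
    have h1 := Finset.card_sdiff_add_card_inter (Finset.range R) A
    have h2 := Finset.card_sdiff_add_card_inter A (Finset.range R)
    rw [Finset.inter_comm] at h2
    rw [Finset.card_range] at h1
    omega
  have key3 : ∑ i ∈ Finset.range R \ A, q i ≤ ∑ i ∈ A \ Finset.range R, b i := by
    by_cases hne : (A \ Finset.range R).Nonempty
    · obtain ⟨i₀, hi₀, hmin⟩ := Finset.exists_min_image (A \ Finset.range R) b hne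
      have hi₀' := Finset.mem_sdiff.1 hi₀
      have hi₀A := Finset.mem_filter.1 hi₀'.1
      have hi₀N : i₀ < N := Finset.mem_range.1 hi₀A.1
      have hi₀R : R ≤ i₀ := le_of_not_gt (fun h => hi₀'.2 (Finset.mem_range.2 h))
      calc ∑ i ∈ Finset.range R \ A, q i
          ≤ (Finset.range R \ A).card • b i₀ := by
            apply Finset.sum_le_card_nsmul
            intro i hi
            have hiR : i < R := Finset.mem_range.1 (Finset.mem_sdiff.1 hi).1
            have hiN : i < N := lt_of_lt_of_le hiR hRN
            have hpii₀ : p i ≤ p i₀ := hp i i₀ (by omega) hi₀N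
            exact (hqspec i hiN).2.2 (b i₀) (hb i₀ hi₀N) (le_trans hpii₀ hi₀A.2.1)
        _ = (A \ Finset.range R).card • b i₀ := by rw [hcardeq]
        _ ≤ ∑ i ∈ A \ Finset.range R, b i := Finset.card_nsmul_le_sum _ _ _ hmin
    · rw [Finset.not_nonempty_iff_eq_empty] at hne
      have h0 : (Finset.range R \ A).card = 0 := by rw [hcardeq, hne]; simp
      rw [Finset.card_eq_zero] at h0
      rw [h0, hne]
      simp
  have hsplitq : ∑ i ∈ Finset.range R, q i
      = ∑ i ∈ Finset.range R ∩ A, q i + ∑ i ∈ Finset.range R \ A, q i :=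
    (Finset.sum_inter_add_sum_sdiff _ _ _).symm
  have hsplitb : ∑ i ∈ A, b i
      = ∑ i ∈ A ∩ Finset.range R, b i + ∑ i ∈ A \ Finset.range R, b i :=
    (Finset.sum_inter_add_sum_sdiff _ _ _).symm
  have hXq : ∑ i ∈ X, q i = ∑ i ∈ Finset.range R ∩ A, q i := by
    rw [hX, Finset.inter_comm]
  have hXb : ∑ i ∈ X, b i = ∑ i ∈ A ∩ Finset.range R, b i := by rw [hX]
  have hsplitT : ∑ i ∈ T, b i
      = ∑ i ∈ T, cB R p B i + ∑ i ∈ T, (b i - cB R p B i) := by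
    rw [← Finset.sum_add_distrib]
    exact Finset.sum_congr rfl (fun i _ => by ring)
  rw [gapVal, gapVal, halgb, halgcB, hTval]
  linarith

private lemma cA_formA (N : ℕ) (p : ℕ → ℝ) (B : Finset ℝ) (hB : B.Nonempty) :
    FormA N p B (cA p B) := by
  intro i _
  by_cases h : p i ≤ B.min' hB
  · right
    constructor
    · rintro ⟨β, hβ, hβlt⟩
      have := Finset.min'_le B β hβ
      linarith
    · rw [cA_eq_min p B hB i h]
      exact ⟨B.min'_mem hB, fun β hβ => Finset.min'_le B β hβ⟩
  · left
    obtain ⟨h1, h2, h3⟩ := cA_spec_lt p B hB i h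
    exact ⟨⟨h1, h2⟩, fun β hβ => h3 β hβ.1 hβ.2⟩

private lemma cB_formB (R N : ℕ) (hR : 0 < R) (hRN : R ≤ N)
    (p : ℕ → ℝ) (B : Finset ℝ) (hB : B.Nonempty)
    (hacc : ∀ i < N, ∃ β ∈ B, p i ≤ β) :
    FormB R N p B (cB R p B) := by
  refine ⟨R - 1, by omega, Finset.range R, ?_, Finset.card_range R, ?_, ?_, R - 1, ?_, ?_, ?_, ?_⟩
  · have : R - 1 + 1 = R := by omega
    rw [this]
  · intro i hi
    have hiR : i < R := Finset.mem_range.1 hi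
    have hiN : i < N := lt_of_lt_of_le hiR hRN
    obtain ⟨h1, h2, h3⟩ := qB_spec p B i (hacc i hiN)
    rw [cB, if_pos hiR]
    exact ⟨⟨h1, h2⟩, fun β hβ => h3 β hβ.1 hβ.2⟩
  · intro i _ i' hi'
    have : R - 1 + 1 = R := by omega
    rw [this] at hi'
    simp at hi'
  · exact Finset.mem_range.2 (by omega)
  · intro i hi
    have := Finset.mem_range.1 hi
    omega
  · intro i' hti' _
    have hi'R : ¬ i' < R := by omega
    rw [cB, if_neg hi'R, dif_pos hB]
    exact ⟨B.max'_mem hB, fun β hβ => Finset.le_max' B β hβ⟩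
  · intro i' hi' hi'S
    exact absurd (Finset.mem_range.2 (by omega)) hi'S

/-- Structural claim underlying Algorithm OPT_BUDGET: with nondecreasing prices,
a gap-maximizing budget sequence over the finite budget set `B` can always be
found among the sequences of form (a) (maximal rejection) or form (b) (exhaust
all resources at minimal algorithm welfare), assuming every candidate
acceptance budget exists in `B`. -/
theorem adversary_optimum_two_forms
    (R N : ℕ) (hR : 0 < R) (hRN : R ≤ N)
    (p : ℕ → ℝ) (hp : ∀ i j, i ≤ j → j < N → p i ≤ p j)
    (B : Finset ℝ) (hB : B.Nonempty) (hBpos : ∀ β ∈ B, 0 < β)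
    (hacc : ∀ i < N, ∃ β ∈ B, p i ≤ β) :
    ∃ b : ℕ → ℝ, (∀ i < N, b i ∈ B) ∧
      (FormA N p B b ∨ FormB R N p B b) ∧
      ∀ b' : ℕ → ℝ, (∀ i < N, b' i ∈ B) →
        gapVal R N p b' ≤ gapVal R N p b := by
  classical
  have hcAmem : ∀ i < N, cA p B i ∈ B := fun i _ => cA_mem p B hB i
  have hcBmem : ∀ i < N, cB R p B i ∈ B := by
    intro i hiN
    by_cases hiR : i < R
    · rw [cB, if_pos hiR]
      exact (qB_spec p B i (hacc i hiN)).1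
    · rw [cB, if_neg hiR, dif_pos hB]
      exact B.max'_mem hB
  have hdom : ∀ b' : ℕ → ℝ, (∀ i < N, b' i ∈ B) →
      gapVal R N p b' ≤ max (gapVal R N p (cA p B)) (gapVal R N p (cB R p B)) := by
    intro b' hb'
    have hle := usedRes_le_R R p b' N
    by_cases hcase : usedRes R p b' N = R
    · exact le_trans (gap_le_cB R N p B hB hBpos hRN hp hacc b' hb' hcase)
        (le_max_right _ _)
    · exact le_trans (gap_le_cA R N p B hB hBpos hRN b' hb' (by omega))
        (le_max_left _ _)
  by_cases hc : gapVal R N p (cA p B) ≤ gapVal R N p (cB R p B)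
  · refine ⟨cB R p B, hcBmem, Or.inr (cB_formB R N hR hRN p B hB hacc), ?_⟩
    intro b' hb'
    have := hdom b' hb'
    rw [max_eq_right hc] at this
    exact this
  · refine ⟨cA p B, hcAmem, Or.inl (cA_formA N p B hB), ?_⟩
    intro b' hb'
    have := hdom b' hb'
    rw [max_eq_left (le_of_not_ge hc)] at this
    exact this
end
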